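/- If θ₁ = θ₂ = ⋯ = θ_N = θ, the Poisson-Binomial PMF reduces to the Binomial PMF: (1/(N+1)) Σ_{ℓ=0}^N c^{-ℓm}[1 + (c^ℓ - 1)θ]^N = C(N,m) θ^m (1-θ)^{N-m}, for all m ∈ {0,…,N}, where c = exp(2πi/(N+1)). -/

import Mathlib

/-!
Writing `1 + (c^ℓ - 1) θ = θ c^ℓ + (1 - θ)` and expanding by the binomial theorem shows that the
summand is `c^{-ℓm}` times the value at `c^ℓ` of the probability generating function
`∑ₖ C(N,k) θ^k (1-θ)^{N-k} X^k`. Averaging over the `(N+1)`-st roots of unity is the inverse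
discrete Fourier transform, which by orthogonality of the characters `ℓ ↦ c^{kℓ}` extracts the
coefficient of `X^m`.
-/

open Finset

namespace IsPrimitiveRoot

variable {K : Type*} [Field K] {ζ : K} {n : ℕ}

theorem sum_pow_div_pow_pow (h : IsPrimitiveRoot ζ n) {k m : ℕ} (hk : k < n) (hm : m < n) :
    ∑ ℓ ∈ range n, (ζ ^ k / ζ ^ m) ^ ℓ = if k = m then (n : K) else 0 := by
  have hζ : ζ ≠ 0 := h.ne_zero (by omega)
  split_ifs with hkm
  · simp [hkm, hζ]
  · have hne : ζ ^ k / ζ ^ m ≠ 1 := fun h1 =>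
      hkm (h.pow_inj hk hm (div_eq_one_iff_eq (pow_ne_zero m hζ) |>.mp h1))
    have hpow : (ζ ^ k / ζ ^ m) ^ n = 1 := by
      rw [div_pow, ← pow_mul, ← pow_mul, mul_comm k, mul_comm m, pow_mul, pow_mul, h.pow_eq_one,
        one_pow, one_pow, div_one]
    rw [geom_sum_eq hne, hpow, sub_self, zero_div]

theorem sum_inv_pow_mul_sum_pow (h : IsPrimitiveRoot ζ n) (a : ℕ → K) {m : ℕ} (hm : m < n) :
    ∑ ℓ ∈ range n, (ζ ^ (ℓ * m))⁻¹ * ∑ k ∈ range n, a k * (ζ ^ ℓ) ^ k = n * a m := by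
  have hζ : ζ ≠ 0 := h.ne_zero (by omega)
  have hterm : ∀ ℓ k, (ζ ^ (ℓ * m))⁻¹ * (a k * (ζ ^ ℓ) ^ k) = a k * (ζ ^ k / ζ ^ m) ^ ℓ := by
    intro ℓ k
    rw [div_pow, ← pow_mul, ← pow_mul, ← pow_mul, mul_comm k ℓ, mul_comm m ℓ]
    field_simp
  simp_rw [mul_sum, hterm]
  rw [sum_comm]
  simp_rw [← mul_sum]
  rw [sum_congr rfl fun k hk => by rw [h.sum_pow_div_pow_pow (mem_range.mp hk) hm]]
  simp [hm, mul_comm]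

end IsPrimitiveRoot

theorem one_add_sub_one_mul_pow_eq_sum {R : Type*} [CommRing R] (z t : R) (N : ℕ) :
    (1 + (z - 1) * t) ^ N =
      ∑ k ∈ range (N + 1), (N.choose k * t ^ k * (1 - t) ^ (N - k)) * z ^ k := by
  rw [show 1 + (z - 1) * t = t * z + (1 - t) by ring, add_pow]
  refine sum_congr rfl fun k _ => ?_
  ring

theorem poisson_binomial_reduces_to_binomial_general (N : ℕ)
    (θ : ℝ) (m : ℕ) (hm : m ≤ N)
    (c : ℂ) (hc : c = Complex.exp (2 * (Real.pi : ℂ) * Complex.I / ((N : ℂ) + 1))) :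
    (1 / ((N : ℂ) + 1)) * ∑ ℓ ∈ Finset.range (N + 1),
        (c ^ (ℓ * m))⁻¹ * (1 + (c ^ ℓ - 1) * (θ : ℂ)) ^ N =
      (N.choose m : ℂ) * (θ : ℂ) ^ m * (1 - (θ : ℂ)) ^ (N - m) := by
  have hprim : IsPrimitiveRoot c (N + 1) := by
    simpa [hc] using Complex.isPrimitiveRoot_exp (N + 1) N.succ_ne_zero
  simp_rw [one_add_sub_one_mul_pow_eq_sum]
  rw [hprim.sum_inv_pow_mul_sum_pow _ (Nat.lt_succ_of_le hm)]
  have hN : ((N : ℂ) + 1) ≠ 0 := Nat.cast_add_one_ne_zero N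
  push_cast
  field_simp

/-- With uniform `θ`, the Poisson-Binomial DFT formula reduces to the Binomial PMF:
`(1/(N+1)) ∑_{ℓ=0}^N c^{-ℓm}[1+(c^ℓ-1)θ]^N = C(N,m) θ^m (1-θ)^{N-m}`. -/
theorem poisson_binomial_reduces_to_binomial (N : ℕ) (hN : 1 ≤ N)
    (θ : ℝ) (hθ : θ ∈ Set.Icc (0:ℝ) 1) (m : ℕ) (hm : m ≤ N)
    (c : ℂ) (hc : c = Complex.exp (2 * (Real.pi : ℂ) * Complex.I / ((N : ℂ) + 1))) :
    (1 / ((N : ℂ) + 1)) * ∑ ℓ ∈ Finset.range (N + 1),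
        (c ^ (ℓ * m))⁻¹ * (1 + (c ^ ℓ - 1) * (θ : ℂ)) ^ N =
      (N.choose m : ℂ) * (θ : ℂ) ^ m * (1 - (θ : ℂ)) ^ (N - m) :=
  poisson_binomial_reduces_to_binomial_general N θ m hm c hc
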